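/- Let ψ₁, ψ₂ : Fin 2 × Fin 2 × Fin 2 → ℂ be the three-qubit pure states with ψ₁(0,0,1) = ψ₁(0,1,0) = 1/√2 and all other entries 0, and ψ₂(1,0,1) = ψ₂(0,1,1) = 1/√2 and all other entries 0. Then ψ₁ and ψ₂ are not SLOCC equivalent: there do not exist invertible matrices C₁, C₂, C₃ : Matrix (Fin 2) (Fin 2) ℂ such that ψ₂ (x₁,x₂,x₃) = Σ_{y₁,y₂,y₃} C₁ x₁ y₁ * C₂ x₂ y₂ * C₃ x₃ y₃ * ψ₁ (y₁,y₂,y₃) for all x₁,x₂,x₃. -/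

import Mathlib

/-- The state `|ψ₁⟩ = (|001⟩ + |010⟩)/√2`. -/
noncomputable def psi1 (x : Fin 2 × Fin 2 × Fin 2) : ℂ :=
  if x = (0, 0, 1) ∨ x = (0, 1, 0) then ((Real.sqrt 2 : ℝ) : ℂ)⁻¹ else 0

/-- The state `|ψ₂⟩ = (|101⟩ + |011⟩)/√2`. -/
noncomputable def psi2 (x : Fin 2 × Fin 2 × Fin 2) : ℂ :=
  if x = (1, 0, 1) ∨ x = (0, 1, 1) then ((Real.sqrt 2 : ℝ) : ℂ)⁻¹ else 0

/-!
`ψ₁ = |0⟩ ⊗ (|01⟩ + |10⟩)/√2` is a product state across the cut between the first qubit and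
the other two, and applying local operators `C₁ ⊗ C₂ ⊗ C₃` keeps a state
a product across that cut. `ψ₂ = (|10⟩ + |01⟩)/√2 ⊗ |1⟩` is not: its `2 × 4` flattening
has a non-vanishing `2 × 2` minor.
-/

section LocalOperators

variable {R ι₁ ι₂ ι₃ κ₁ κ₂ κ₃ : Type*} [CommSemiring R]

def IsSeparableFirst (ψ : ι₁ × ι₂ × ι₃ → R) : Prop :=
  ∃ (a : ι₁ → R) (b : ι₂ × ι₃ → R), ∀ x₁ p, ψ (x₁, p) = a x₁ * b p

theorem IsSeparableFirst.mul_mul_comm {ψ : ι₁ × ι₂ × ι₃ → R} (hψ : IsSeparableFirst ψ)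
    (i j : ι₁) (p q : ι₂ × ι₃) : ψ (i, p) * ψ (j, q) = ψ (i, q) * ψ (j, p) := by
  obtain ⟨a, b, hab⟩ := hψ
  simp only [hab]
  ring

variable [Fintype ι₁] [Fintype ι₂] [Fintype ι₃]

def localAction (C₁ : Matrix κ₁ ι₁ R) (C₂ : Matrix κ₂ ι₂ R) (C₃ : Matrix κ₃ ι₃ R)
    (ψ : ι₁ × ι₂ × ι₃ → R) (x : κ₁ × κ₂ × κ₃) : R :=
  ∑ y₁, ∑ y₂, ∑ y₃, C₁ x.1 y₁ * C₂ x.2.1 y₂ * C₃ x.2.2 y₃ * ψ (y₁, y₂, y₃)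

theorem IsSeparableFirst.localAction {ψ : ι₁ × ι₂ × ι₃ → R} (hψ : IsSeparableFirst ψ)
    (C₁ : Matrix κ₁ ι₁ R) (C₂ : Matrix κ₂ ι₂ R) (C₃ : Matrix κ₃ ι₃ R) :
    IsSeparableFirst (localAction C₁ C₂ C₃ ψ) := by
  obtain ⟨a, b, hab⟩ := hψ
  refine ⟨C₁.mulVec a, fun p => ∑ y₂, ∑ y₃, C₂ p.1 y₂ * C₃ p.2 y₃ * b (y₂, y₃),
    fun x₁ ⟨x₂, x₃⟩ => ?_⟩
  simp only [_root_.localAction, hab, Matrix.mulVec, dotProduct, Finset.sum_mul]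
  simp only [Finset.mul_sum]
  refine Fintype.sum_congr _ _ fun y₁ => Fintype.sum_congr _ _ fun y₂ =>
    Fintype.sum_congr _ _ fun y₃ => by ring

end LocalOperators

theorem isSeparableFirst_psi1 : IsSeparableFirst psi1 := by
  refine ⟨fun i => if i = 0 then 1 else 0, fun p => psi1 (0, p), fun x₁ p => ?_⟩
  fin_cases x₁ <;> simp [psi1]

theorem not_isSeparableFirst_psi2 : ¬ IsSeparableFirst psi2 := by
  intro h
  have minor := h.mul_mul_comm 1 0 (0, 1) (1, 1)
  simp [psi2] at minor

/-- The three-qubit pure states `(|001⟩+|010⟩)/√2` and `(|101⟩+|011⟩)/√2` are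
not SLOCC equivalent. -/
theorem psi1_psi2_not_slocc :
    ¬ ∃ C₁ C₂ C₃ : Matrix (Fin 2) (Fin 2) ℂ,
        IsUnit C₁ ∧ IsUnit C₂ ∧ IsUnit C₃ ∧
        ∀ x₁ x₂ x₃ : Fin 2, psi2 (x₁, x₂, x₃) =
          ∑ y₁ : Fin 2, ∑ y₂ : Fin 2, ∑ y₃ : Fin 2,
            C₁ x₁ y₁ * C₂ x₂ y₂ * C₃ x₃ y₃ * psi1 (y₁, y₂, y₃) := by
  rintro ⟨C₁, C₂, C₃, -, -, -, h⟩
  have hpsi2 : psi2 = localAction C₁ C₂ C₃ psi1 := funext fun ⟨x₁, x₂, x₃⟩ => h x₁ x₂ x₃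
  exact not_isSeparableFirst_psi2 (hpsi2 ▸ isSeparableFirst_psi1.localAction C₁ C₂ C₃)
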